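/- As p → 1⁺, the first eigenvalue of the linearized operator tends to zero: lim_{p→1⁺} α₁(p) = 0. -/

import Mathlib

open Real Set Filter Topology

noncomputable section

/-- `u` is the (unique) positive solution of the one-dimensional Lane–Emden problem
`-u'' = u^p` on `(-1,1)` with `u(-1) = u(1) = 0`; it is even, positive on `(-1,1)`,
decreasing on `[0,1]`, and its sup norm is attained at `0`. -/
def IsLaneEmden (p : ℝ) (u : ℝ → ℝ) : Prop :=
  ContDiff ℝ 2 u ∧
  (∀ t ∈ Ioo (-1 : ℝ) 1, deriv (deriv u) t = -(u t ^ p)) ∧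
  u (-1) = 0 ∧ u 1 = 0 ∧
  (∀ t ∈ Ioo (-1 : ℝ) 1, 0 < u t) ∧
  (∀ t : ℝ, u (-t) = u t) ∧
  (∀ ⦃s t : ℝ⦄, s ∈ Icc (0 : ℝ) 1 → t ∈ Icc (0 : ℝ) 1 → s ≤ t → u t ≤ u s) ∧
  (∀ t ∈ Icc (-1 : ℝ) 1, u t ≤ u 0)

/-- `α` is the first eigenvalue of the linearized operator `-d²/dt² - p u^(p-1)`
with Dirichlet boundary conditions on `(-1,1)`, characterized by the existence of a
positive eigenfunction. -/
def IsFirstEig (p : ℝ) (u : ℝ → ℝ) (α : ℝ) : Prop :=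
  ∃ w : ℝ → ℝ, ContDiff ℝ 2 w ∧
    (∀ t ∈ Ioo (-1 : ℝ) 1, 0 < w t) ∧
    w (-1) = 0 ∧ w 1 = 0 ∧
    (∀ t ∈ Ioo (-1 : ℝ) 1, -(deriv (deriv w) t) - p * u t ^ (p - 1) * w t = α * w t)

/-!
Green's identity for `u = u_p` and the positive eigenfunction `w` gives
`α₁(p) ∫ u w = -(p - 1) ∫ u^p w`, hence `-(p - 1) ‖u‖_∞^(p-1) ≤ α₁(p) ≤ 0`. The factor
`‖u‖_∞^(p-1)` stays bounded as `p → 1⁺`: concavity gives `u(0) ≤ 2 u(1/2)`, and since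
`u'' ≤ -u(1/2)^p` on `(0, 1/2)` the mean value theorem and concavity once more give
`u(1/2)^(p-1) ≤ 4`, so `‖u‖_∞^(p-1) ≤ 2^(p+1)`.
-/

open MeasureTheory

section Regularity

variable {𝕜 F : Type*} [NontriviallyNormedField 𝕜] [NormedAddCommGroup F] [NormedSpace 𝕜 F]
  {f : 𝕜 → F}

theorem ContDiff.differentiable_deriv_of_two (hf : ContDiff 𝕜 2 f) :
    Differentiable 𝕜 (deriv f) :=
  (hf.iterate_deriv' 1 1).differentiable one_ne_zero

theorem ContDiff.continuous_deriv_deriv (hf : ContDiff 𝕜 2 f) : Continuous (deriv (deriv f)) :=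
  (hf.iterate_deriv' 0 2).continuous

end Regularity

theorem integral_deriv_deriv_mul_sub_mul_deriv_deriv {f g : ℝ → ℝ} (hf : ContDiff ℝ 2 f)
    (hg : ContDiff ℝ 2 g) (a b : ℝ) :
    ∫ x in a..b, (deriv (deriv f) x * g x - f x * deriv (deriv g) x) =
      (deriv f b * g b - f b * deriv g b) - (deriv f a * g a - f a * deriv g a) := by
  have hf₁ := hf.differentiable two_ne_zero
  have hg₁ := hg.differentiable two_ne_zero
  have hf₂ := hf.differentiable_deriv_of_two
  have hg₂ := hg.differentiable_deriv_of_two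
  refine intervalIntegral.integral_eq_sub_of_hasDerivAt
    (f := fun x => deriv f x * g x - f x * deriv g x) (fun x _ => ?_)
    (((hf.continuous_deriv_deriv.mul hg.continuous).sub
      (hf.continuous.mul hg.continuous_deriv_deriv)).intervalIntegrable _ _)
  exact (((hf₂ x).hasDerivAt.mul (hg₁ x).hasDerivAt).sub
    ((hf₁ x).hasDerivAt.mul (hg₂ x).hasDerivAt)).congr_deriv (by ring)

theorem nonneg_of_pos_on_Ioo {f : ℝ → ℝ} {a b : ℝ} (ha : f a = 0) (hb : f b = 0)
    (hpos : ∀ t ∈ Ioo a b, 0 < f t) {t : ℝ} (ht : t ∈ Icc a b) : 0 ≤ f t := by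
  rcases ht.1.eq_or_lt with rfl | hat
  · exact ha.ge
  rcases ht.2.eq_or_lt with rfl | htb
  · exact hb.ge
  exact (hpos t ⟨hat, htb⟩).le

namespace IsLaneEmden

variable {p : ℝ} {u : ℝ → ℝ} (hu : IsLaneEmden p u)
include hu

theorem contDiff : ContDiff ℝ 2 u := hu.1

theorem deriv_deriv_eq {t : ℝ} (ht : t ∈ Ioo (-1 : ℝ) 1) : deriv (deriv u) t = -(u t ^ p) :=
  hu.2.1 t ht

theorem apply_neg_one : u (-1) = 0 := hu.2.2.1

theorem apply_one : u 1 = 0 := hu.2.2.2.1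

theorem pos {t : ℝ} (ht : t ∈ Ioo (-1 : ℝ) 1) : 0 < u t := hu.2.2.2.2.1 t ht

theorem antitoneOn : AntitoneOn u (Icc 0 1) := fun _ hs _ ht hst => hu.2.2.2.2.2.2.1 hs ht hst

theorem le_apply_zero {t : ℝ} (ht : t ∈ Icc (-1 : ℝ) 1) : u t ≤ u 0 := hu.2.2.2.2.2.2.2 t ht

theorem nonneg {t : ℝ} (ht : t ∈ Icc (-1 : ℝ) 1) : 0 ≤ u t :=
  nonneg_of_pos_on_Ioo hu.apply_neg_one hu.apply_one (fun _ => hu.pos) ht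

theorem concaveOn : ConcaveOn ℝ (Icc (-1) 1) u := by
  refine concaveOn_of_deriv2_nonpos (convex_Icc _ _) hu.contDiff.continuous.continuousOn
    (hu.contDiff.differentiable two_ne_zero).differentiableOn
    hu.contDiff.differentiable_deriv_of_two.differentiableOn fun t ht => ?_
  rw [interior_Icc] at ht
  rw [Function.iterate_succ_apply, Function.iterate_one, hu.deriv_deriv_eq ht, neg_nonpos]
  exact rpow_nonneg (hu.pos ht).le p

theorem deriv_zero : deriv u 0 = 0 :=
  IsLocalMax.deriv_eq_zero <| mem_of_superset (Icc_mem_nhds (by norm_num) (by norm_num))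
    fun _ => hu.le_apply_zero

theorem le_two_mul_half : u 0 ≤ 2 * u (1 / 2) := by
  have h := hu.concaveOn.2 (show (0 : ℝ) ∈ Icc (-1) 1 by norm_num)
    (show (1 : ℝ) ∈ Icc (-1) 1 by norm_num) (show (0 : ℝ) ≤ 1 / 2 by norm_num)
    (show (0 : ℝ) ≤ 1 / 2 by norm_num) (by norm_num)
  norm_num [hu.apply_one] at h
  linarith

theorem rpow_half_le (hp : 0 ≤ p) : u (1 / 2) ^ p ≤ 4 * u (1 / 2) := by
  obtain ⟨ξ, hξ, hξeq⟩ := exists_deriv_eq_slope (deriv u) (by norm_num : (0 : ℝ) < 1 / 2)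
    (hu.contDiff.continuous_deriv (by norm_num)).continuousOn
    hu.contDiff.differentiable_deriv_of_two.differentiableOn
  have hderiv_half : deriv u (1 / 2) ≤ -(u (1 / 2) ^ p / 2) := by
    have hmono : u (1 / 2) ^ p ≤ u ξ ^ p :=
      rpow_le_rpow (hu.nonneg (by norm_num))
        (hu.antitoneOn ⟨hξ.1.le, by linarith [hξ.2]⟩ (by norm_num) hξ.2.le) hp
    rw [hu.deriv_deriv_eq ⟨by linarith [hξ.1], by linarith [hξ.2]⟩, hu.deriv_zero] at hξeq
    norm_num at hξeq
    linarith
  have hslope := hu.concaveOn.slope_le_deriv (show (1 / 2 : ℝ) ∈ Icc (-1) 1 by norm_num)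
    (show (1 : ℝ) ∈ Icc (-1) 1 by norm_num) (by norm_num)
    (hu.contDiff.differentiable two_ne_zero _)
  rw [slope_def_field, hu.apply_one] at hslope
  norm_num at hslope
  linarith

theorem rpow_sub_one_le (hp : 1 ≤ p) : u 0 ^ (p - 1) ≤ 2 ^ (p + 1) := by
  have hhalf : 0 < u (1 / 2) := hu.pos (by norm_num)
  have h4 : u (1 / 2) ^ (p - 1) ≤ 4 := by
    rw [rpow_sub_one hhalf.ne', div_le_iff₀ hhalf]
    exact hu.rpow_half_le (by linarith)
  calc u 0 ^ (p - 1) ≤ (2 * u (1 / 2)) ^ (p - 1) :=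
        rpow_le_rpow (hu.nonneg (by norm_num)) hu.le_two_mul_half (by linarith)
    _ = 2 ^ (p - 1) * u (1 / 2) ^ (p - 1) := mul_rpow zero_le_two hhalf.le
    _ ≤ 2 ^ (p - 1) * 4 := by gcongr
    _ = 2 ^ (p + 1) := by
      rw [show p + 1 = (p - 1) + 2 by ring, rpow_add zero_lt_two]
      norm_num

theorem rpow_le_mul (hp : 1 < p) {t : ℝ} (ht : t ∈ Icc (-1 : ℝ) 1) :
    u t ^ p ≤ 2 ^ (p + 1) * u t := by
  rcases (hu.nonneg ht).eq_or_lt with h0 | hpos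
  · rw [← h0, zero_rpow (by linarith)]
    simp
  calc u t ^ p = u t ^ (p - 1) * u t := by
        rw [rpow_sub_one hpos.ne', div_mul_cancel₀ _ hpos.ne']
    _ ≤ u 0 ^ (p - 1) * u t := by gcongr; exact hu.le_apply_zero ht
    _ ≤ 2 ^ (p + 1) * u t := by gcongr; exact hu.rpow_sub_one_le hp.le

theorem eigenvalue_mul_integral_eq {a : ℝ} {w : ℝ → ℝ} (hp : 0 ≤ p) (hw : ContDiff ℝ 2 w)
    (hwm : w (-1) = 0) (hwp : w 1 = 0)
    (hweq : ∀ t ∈ Ioo (-1 : ℝ) 1, -(deriv (deriv w) t) - p * u t ^ (p - 1) * w t = a * w t) :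
    a * ∫ t in (-1 : ℝ)..1, u t * w t = -((p - 1) * ∫ t in (-1 : ℝ)..1, u t ^ p * w t) := by
  have hgreen := integral_deriv_deriv_mul_sub_mul_deriv_deriv hu.contDiff hw (-1) 1
  rw [hu.apply_neg_one, hu.apply_one, hwm, hwp] at hgreen
  have hintegrand : ∀ t ∈ Ioo (-1 : ℝ) 1, deriv (deriv u) t * w t - u t * deriv (deriv w) t =
      (p - 1) * (u t ^ p * w t) + a * (u t * w t) := by
    intro t ht
    have hpow : u t ^ p = u t ^ (p - 1) * u t := by
      rw [rpow_sub_one (hu.pos ht).ne', div_mul_cancel₀ _ (hu.pos ht).ne']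
    rw [hu.deriv_deriv_eq ht, show deriv (deriv w) t = -(p * u t ^ (p - 1) * w t) - a * w t by
      linarith [hweq t ht], hpow]
    ring
  have hcongr : ∫ t in (-1 : ℝ)..1, (deriv (deriv u) t * w t - u t * deriv (deriv w) t) =
      ∫ t in (-1 : ℝ)..1, ((p - 1) * (u t ^ p * w t) + a * (u t * w t)) := by
    refine intervalIntegral.integral_congr_ae ?_
    filter_upwards [Measure.ae_ne volume 1] with t hne ht
    rw [uIoc_of_le (by norm_num)] at ht
    exact hintegrand t ⟨ht.1, ht.2.lt_of_ne hne⟩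
  have hcu := hu.contDiff.continuous
  have hcu_pow : Continuous fun t => u t ^ p := hcu.rpow_const fun _ => Or.inr hp
  rw [hcongr, intervalIntegral.integral_add (f := fun t => (p - 1) * (u t ^ p * w t))
    (g := fun t => a * (u t * w t))
    ((continuous_const.mul (hcu_pow.mul hw.continuous)).intervalIntegrable _ _)
    ((continuous_const.mul (hcu.mul hw.continuous)).intervalIntegrable _ _),
    intervalIntegral.integral_const_mul, intervalIntegral.integral_const_mul] at hgreen
  simp only [mul_zero, zero_mul, sub_self] at hgreen
  linarith

end IsLaneEmden

theorem IsFirstEig.mem_Icc {p a : ℝ} {u : ℝ → ℝ} (ha : IsFirstEig p u a)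
    (hu : IsLaneEmden p u) (hp : 1 < p) : a ∈ Icc (-((p - 1) * 2 ^ (p + 1))) 0 := by
  obtain ⟨w, hw, hwpos, hwm, hwp, hweq⟩ := ha
  have hwnn : ∀ t ∈ Icc (-1 : ℝ) 1, 0 ≤ w t := fun _ => nonneg_of_pos_on_Ioo hwm hwp hwpos
  have hid := hu.eigenvalue_mul_integral_eq (by linarith) hw hwm hwp hweq
  have hcu := hu.contDiff.continuous
  have hI : 0 < ∫ t in (-1 : ℝ)..1, u t * w t :=
    intervalIntegral.intervalIntegral_pos_of_pos_on
      ((hcu.mul hw.continuous).intervalIntegrable _ _)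
      (fun t ht => mul_pos (hu.pos ht) (hwpos t ht)) (by norm_num)
  have hJ : 0 ≤ ∫ t in (-1 : ℝ)..1, u t ^ p * w t :=
    intervalIntegral.integral_nonneg (by norm_num)
      fun t ht => mul_nonneg (rpow_nonneg (hu.nonneg ht) p) (hwnn t ht)
  have hJI : ∫ t in (-1 : ℝ)..1, u t ^ p * w t ≤
      2 ^ (p + 1) * ∫ t in (-1 : ℝ)..1, u t * w t := by
    rw [← intervalIntegral.integral_const_mul]
    refine intervalIntegral.integral_mono_on (by norm_num)
      (((hcu.rpow_const fun _ => Or.inr (by linarith)).mul hw.continuous).intervalIntegrable _ _)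
      ((continuous_const.mul (hcu.mul hw.continuous)).intervalIntegrable _ _) fun t ht => ?_
    rw [← mul_assoc]
    exact mul_le_mul_of_nonneg_right (hu.rpow_le_mul hp ht) (hwnn t ht)
  constructor <;> nlinarith

/-- As `p → 1⁺`, the first eigenvalue of the linearized operator tends to `0`. -/
theorem first_eigenvalue_tendsto_zero
    (u : ℝ → ℝ → ℝ) (α : ℝ → ℝ)
    (hu : ∀ p : ℝ, 1 < p → IsLaneEmden p (u p))
    (hα : ∀ p : ℝ, 1 < p → IsFirstEig p (u p) (α p)) :
    Tendsto α (𝓝[>] (1 : ℝ)) (𝓝 0) := by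
  have hbound : ∀ᶠ p in 𝓝[>] (1 : ℝ), α p ∈ Icc (-((p - 1) * 2 ^ (p + 1))) 0 :=
    eventually_nhdsWithin_of_forall fun p hp => (hα p hp).mem_Icc (hu p hp) hp
  have hlower : Tendsto (fun p : ℝ => -((p - 1) * 2 ^ (p + 1))) (𝓝[>] 1) (𝓝 0) := by
    have hcont : Continuous fun p : ℝ => -((p - 1) * (2 : ℝ) ^ (p + 1)) := by
      fun_prop (disch := norm_num)
    simpa using (hcont.tendsto 1).mono_left nhdsWithin_le_nhds
  exact tendsto_of_tendsto_of_tendsto_of_le_of_le' hlower tendsto_const_nhds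
    (hbound.mono fun _ h => h.1) (hbound.mono fun _ h => h.2)
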